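/- Liouville's formula for the Jacobian of a flow. Let u : ℝⁿ × ℝ → ℝⁿ be smooth and let φ : ℝ × ℝⁿ → ℝⁿ be smooth with ∂ₜφ(t,x₀) = u(φ(t,x₀), t) for all (t,x₀) and φ(0,x₀) = x₀. Then the Jacobian determinant J(t,x₀) := det(D_{x₀}φ(t,x₀)) satisfies ∂ₜJ(t,x₀) = (div u)(φ(t,x₀), t) · J(t,x₀) for all (t,x₀), with J(0,x₀) = 1. -/

import Mathlib

/-!
Differentiating the flow equation `∂ₜφ = u(φ, t)` in `x₀` and exchanging the two derivatives
(Schwarz) shows that the Jacobian matrix `Dφ` solves the variational equation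
`∂ₜ Dφ = Du(φ, t) · Dφ`. Since the determinant is multilinear in the rows, its derivative along
a matrix curve `A` is `∑ᵢ det (A with row i replaced by A'ᵢ)`, and when `A' = M A` each term is
`Mᵢᵢ · det A`; so `∂ₜ det Dφ = tr Du(φ, t) · det Dφ`, and `tr Du = div u`.
-/

open scoped BigOperators

noncomputable section

/-- Jacobian matrix of a map `f : ℝⁿ → ℝⁿ` at `x`. -/
def jacobian {n : ℕ} (f : (Fin n → ℝ) → (Fin n → ℝ)) (x : Fin n → ℝ) :
    Matrix (Fin n) (Fin n) ℝ :=
  fun i j => fderiv ℝ (fun y => f y i) x (Pi.single j 1)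

namespace Matrix

variable {ι : Type*} [Fintype ι] [DecidableEq ι]

theorem sum_det_updateRow_mul {R : Type*} [CommRing R] (M A : Matrix ι ι R) :
    ∑ i, (A.updateRow i ((M * A) i)).det = M.trace * A.det := by
  simp_rw [show ∀ i, (M * A) i = ∑ k, M i k • A k from fun i => vecMul_eq_sum (M i) A,
    det_updateRow_sum, smul_eq_mul, trace, diag, Finset.sum_mul]

variable {𝕜 : Type*} [NontriviallyNormedField 𝕜]

def detRowContinuousMultilinear : ContinuousMultilinearMap 𝕜 (fun _ : ι => ι → 𝕜) 𝕜 where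
  toMultilinearMap := detRowAlternating.toMultilinearMap
  cont := continuous_id.matrix_det

theorem hasDerivAt_det {A : 𝕜 → Matrix ι ι 𝕜} {A' : Matrix ι ι 𝕜} {t : 𝕜}
    (hA : ∀ i j, HasDerivAt (fun s => A s i j) (A' i j) t) :
    HasDerivAt (fun s => (A s).det) (∑ i, ((A t).updateRow i (A' i)).det) t := by
  -- `Matrix` carries no global norm, so the curve is differentiated in `ι → ι → 𝕜`.
  have hrows : HasDerivAt (fun s => (A s : ι → ι → 𝕜)) A' t :=
    hasDerivAt_pi.2 fun i => hasDerivAt_pi.2 fun j => hA i j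
  have h := ((detRowContinuousMultilinear (𝕜 := 𝕜)).hasFDerivAt (A t)).comp_hasDerivAt t hrows
  exact h.congr_deriv (detRowContinuousMultilinear.linearDeriv_apply (A t) A')

theorem hasDerivAt_det_of_hasDerivAt_mul {A : 𝕜 → Matrix ι ι 𝕜} {M : Matrix ι ι 𝕜} {t : 𝕜}
    (hA : ∀ i j, HasDerivAt (fun s => A s i j) ((M * A t) i j) t) :
    HasDerivAt (fun s => (A s).det) (M.trace * (A t).det) t :=
  (hasDerivAt_det hA).congr_deriv (sum_det_updateRow_mul M (A t))

end Matrix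

theorem hasDerivAt_fderiv_apply_of_contDiff {E G : Type*} [NormedAddCommGroup E]
    [NormedSpace ℝ E] [NormedAddCommGroup G] [NormedSpace ℝ G] {f : ℝ → E → G}
    (hf : ContDiff ℝ 2 (fun p : ℝ × E => f p.1 p.2)) (t : ℝ) (x v : E) :
    HasDerivAt (fun s => fderiv ℝ (f s) x v)
      (fderiv ℝ (fun y => deriv (fun s => f s y) t) x v) t := by
  set F := fun p : ℝ × E => f p.1 p.2
  have hF : Differentiable ℝ F := hf.differentiable two_ne_zero
  have hF' : Differentiable ℝ (fderiv ℝ F) :=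
    (hf.fderiv_right (m := 1) (by norm_num)).differentiable one_ne_zero
  have partial_x : ∀ s y, fderiv ℝ (f s) y v = fderiv ℝ F (s, y) (0, v) := fun s y => by
    have h : HasFDerivAt (f s) ((fderiv ℝ F (s, y)).comp (.inr ℝ ℝ E)) y :=
      (hF (s, y)).hasFDerivAt.comp y (hasFDerivAt_prodMk_right s y)
    rw [h.fderiv]
    rfl
  have partial_t : ∀ y, deriv (fun s => f s y) t = fderiv ℝ F (t, y) (1, 0) := fun y =>
    ((hF (t, y)).hasFDerivAt.comp_hasDerivAt t
      ((hasDerivAt_id' t).prodMk (hasDerivAt_const t y)) :).deriv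
  have hsymm : IsSymmSndFDerivAt ℝ F (t, x) :=
    hf.contDiffAt.isSymmSndFDerivAt (by simp [minSmoothness_of_isRCLikeNormedField])
  have hF'_t : HasDerivAt (fun s => fderiv ℝ F (s, x) (0, v))
      (fderiv ℝ (fderiv ℝ F) (t, x) (1, 0) (0, v)) t := by
    have hcurve : HasDerivAt (fun s => (s, x)) ((1 : ℝ), (0 : E)) t :=
      (hasDerivAt_id' t).prodMk (hasDerivAt_const t x)
    have h : HasDerivAt (fun s => fderiv ℝ F (s, x)) (fderiv ℝ (fderiv ℝ F) (t, x) (1, 0)) t :=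
      (hF' (t, x)).hasFDerivAt.comp_hasDerivAt t hcurve
    exact (h.clm_apply (hasDerivAt_const t ((0 : ℝ), v))).congr_deriv (by simp)
  have hF'_x : HasFDerivAt (fun y => fderiv ℝ F (t, y) (1, 0))
      ((fderiv ℝ (fderiv ℝ F) (t, x)).comp (.inr ℝ ℝ E) |>.flip (1, 0)) x := by
    have h := ((hF' (t, x)).hasFDerivAt.comp x (hasFDerivAt_prodMk_right t x)).clm_apply
      (hasFDerivAt_const ((1 : ℝ), (0 : E)) x)
    exact h.congr_fderiv (by ext w; simp)
  simp only [partial_x, partial_t, hF'_x.fderiv, ContinuousLinearMap.flip_apply,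
    ContinuousLinearMap.comp_apply, ContinuousLinearMap.inr_apply, hsymm.eq (0, v)]
  exact hF'_t

section Jacobian

variable {n : ℕ}

theorem jacobian_eq_toMatrix' {f : (Fin n → ℝ) → Fin n → ℝ} {x : Fin n → ℝ}
    (hf : DifferentiableAt ℝ f x) :
    jacobian f x = LinearMap.toMatrix' (fderiv ℝ f x : (Fin n → ℝ) →ₗ[ℝ] Fin n → ℝ) := by
  ext i j
  rw [LinearMap.toMatrix'_apply, jacobian, ((hasFDerivAt_pi'.1 hf.hasFDerivAt) i).fderiv]
  rfl

theorem jacobian_comp {g f : (Fin n → ℝ) → Fin n → ℝ} {x : Fin n → ℝ}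
    (hg : DifferentiableAt ℝ g (f x)) (hf : DifferentiableAt ℝ f x) :
    jacobian (fun y => g (f y)) x = jacobian g (f x) * jacobian f x := by
  rw [jacobian_eq_toMatrix' (f := fun y => g (f y)) (hg.comp x hf), jacobian_eq_toMatrix' hg,
    jacobian_eq_toMatrix' hf, ← LinearMap.toMatrix'_comp, fderiv_fun_comp x hg hf]
  rfl

theorem jacobian_id (x : Fin n → ℝ) : jacobian id x = 1 := by
  rw [jacobian_eq_toMatrix' differentiableAt_id, fderiv_id]
  exact LinearMap.toMatrix'_id

theorem hasDerivAt_jacobian_of_deriv_eq {φ : ℝ → (Fin n → ℝ) → Fin n → ℝ}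
    {v : (Fin n → ℝ) → Fin n → ℝ} {t : ℝ} {x : Fin n → ℝ}
    (hφ : ContDiff ℝ 2 (fun p : ℝ × (Fin n → ℝ) => φ p.1 p.2))
    (hv : DifferentiableAt ℝ v (φ t x))
    (hflow : ∀ y i, deriv (fun s => φ s y i) t = v (φ t y) i) (i j : Fin n) :
    HasDerivAt (fun s => jacobian (φ s) x i j)
      ((jacobian v (φ t x) * jacobian (φ t) x) i j) t := by
  have hφt : DifferentiableAt ℝ (φ t) x :=
    (hφ.comp (contDiff_const.prodMk contDiff_id)).differentiable two_ne_zero x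
  have hmixed := hasDerivAt_fderiv_apply_of_contDiff (f := fun s y => φ s y i)
    (contDiff_pi.1 hφ i) t x (Pi.single j 1)
  simp only [hflow] at hmixed
  rwa [← jacobian_comp hv hφt]

end Jacobian

/-- **Liouville's formula for the Jacobian of a flow.**
If `φ` is the flow of `u` with `φ(0,·) = id`, then the Jacobian determinant
`J(t,x₀) = det(D_{x₀}φ(t,x₀))` satisfies
`∂ₜJ(t,x₀) = (div u)(φ(t,x₀),t) · J(t,x₀)` and `J(0,x₀) = 1`. -/
theorem liouville_formula
    {n : ℕ}
    (u : (Fin n → ℝ) → ℝ → (Fin n → ℝ))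
    (φ : ℝ → (Fin n → ℝ) → (Fin n → ℝ))
    -- smoothness
    (hu : ContDiff ℝ (⊤ : ℕ∞) (fun p : (Fin n → ℝ) × ℝ => u p.1 p.2))
    (hφ : ContDiff ℝ (⊤ : ℕ∞) (fun p : ℝ × (Fin n → ℝ) => φ p.1 p.2))
    -- φ is the flow map of u, φ(0,·) = id
    (hflow : ∀ t x₀ i, deriv (fun s => φ s x₀ i) t = u (φ t x₀) t i)
    (hinit : ∀ x₀, φ 0 x₀ = x₀) :
    ∀ t x₀,
      HasDerivAt (fun s => (jacobian (φ s) x₀).det)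
        ((∑ i, fderiv ℝ (fun y => u y t i) (φ t x₀) (Pi.single i 1))
          * (jacobian (φ t) x₀).det) t
      ∧ (jacobian (φ 0) x₀).det = 1 := by
  intro t x₀
  have hφ2 : ContDiff ℝ 2 (fun p : ℝ × (Fin n → ℝ) => φ p.1 p.2) := hφ.of_le (WithTop.coe_le_coe.2 le_top)
  have hu_t : DifferentiableAt ℝ (fun y => u y t) (φ t x₀) :=
    (hu.comp (contDiff_id.prodMk contDiff_const)).differentiable (by simp) _
  refine ⟨?_, ?_⟩
  · exact Matrix.hasDerivAt_det_of_hasDerivAt_mul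
      (hasDerivAt_jacobian_of_deriv_eq hφ2 hu_t fun y i => hflow t y i)
  · rw [show φ 0 = id from funext hinit, jacobian_id, Matrix.det_one]
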